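/- arXiv:2401.07369 — 5 statements merged into one kernel-verified Lean document; each statement's English description precedes it below -/
import Mathlib

section
/- Let D be symmetric positive semi-definite, Σ symmetric positive definite, λ > 0, and J(U) = (U−U*)ᵀD(U−U*) + J*. If 𝒰 ~ 𝒩(U*, Σ), then E[𝒰 exp(−J(𝒰)/λ)] = U* · exp(−J*/λ) / det(I + (2/λ)DΣ)^{1/2}. Consequently E[𝒰 exp(−J(𝒰)/λ)] / E[exp(−J(𝒰)/λ)] = U*; i.e., the optimum U* is a fixed point of the softmax-weighted mean. -/
open MeasureTheory Matrix

section Aux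

variable {k : ℕ}

private lemma smul_posSemidef' {A : Matrix (Fin k) (Fin k) ℝ} (hA : A.PosSemidef) {c : ℝ}
    (hc : 0 ≤ c) : (c • A).PosSemidef := by
  refine .of_dotProduct_mulVec_nonneg ?_ fun x => ?_
  · unfold Matrix.IsHermitian at *
    rw [conjTranspose_smul, hA.1]
    simp
  · rw [smul_mulVec, dotProduct_smul, smul_eq_mul]
    exact mul_nonneg hc (hA.dotProduct_mulVec_nonneg x)

private lemma smul_posDef' {A : Matrix (Fin k) (Fin k) ℝ} (hA : A.PosDef) {c : ℝ}
    (hc : 0 < c) : (c • A).PosDef := by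
  refine .of_dotProduct_mulVec_pos ?_ fun x hx => ?_
  · unfold Matrix.IsHermitian at *
    rw [conjTranspose_smul, hA.1]
    simp
  · rw [smul_mulVec, dotProduct_smul, smul_eq_mul]
    exact mul_pos hc (hA.dotProduct_mulVec_pos hx)

private lemma integral_comp_mulVec' {E : Type*} [NormedAddCommGroup E] [NormedSpace ℝ E]
    (A : Matrix (Fin k) (Fin k) ℝ) (hA : A.det ≠ 0) (f : (Fin k → ℝ) → E) :
    (∫ x, f (A.mulVec x)) = |A.det|⁻¹ • ∫ y, f y := by
  letI := A.invertibleOfIsUnitDet (isUnit_iff_ne_zero.mpr hA)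
  let eL : (Fin k → ℝ) ≃ₗ[ℝ] (Fin k → ℝ) := A.toLinearEquiv' ‹_›
  let e : (Fin k → ℝ) ≃ᵐ (Fin k → ℝ) := eL.toContinuousLinearEquiv.toHomeomorph.toMeasurableEquiv
  have hcoe : ⇑e = fun x => A.mulVec x := by
    funext x
    simp [e, eL, Matrix.toLinearEquiv', Matrix.toLin'_apply]
  have hmap : Measure.map (fun x => A.mulVec x) volume
      = ENNReal.ofReal |A.det⁻¹| • volume := by
    have h := Real.map_matrix_volume_pi_eq_smul_volume_pi hA
    rwa [show ⇑(Matrix.toLin' A) = fun x => A.mulVec x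
      from funext fun x => Matrix.toLin'_apply A x] at h
  calc ∫ x, f (A.mulVec x) = ∫ x, f (e x) := by rw [hcoe]
    _ = ∫ y, f y ∂(Measure.map (⇑e) volume) := (integral_map_equiv e f).symm
    _ = ∫ y, f y ∂(ENNReal.ofReal |A.det⁻¹| • volume) := by rw [hcoe, hmap]
    _ = |A.det|⁻¹ • ∫ y, f y := by
        rw [integral_smul_measure, ENNReal.toReal_ofReal (abs_nonneg _), abs_inv]

private lemma integrable_comp_mulVec_iff' {E : Type*} [NormedAddCommGroup E] [NormedSpace ℝ E]
    (A : Matrix (Fin k) (Fin k) ℝ) (hA : A.det ≠ 0) (f : (Fin k → ℝ) → E) :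
    Integrable (fun x => f (A.mulVec x)) ↔ Integrable f := by
  letI := A.invertibleOfIsUnitDet (isUnit_iff_ne_zero.mpr hA)
  let eL : (Fin k → ℝ) ≃ₗ[ℝ] (Fin k → ℝ) := A.toLinearEquiv' ‹_›
  let e : (Fin k → ℝ) ≃ᵐ (Fin k → ℝ) := eL.toContinuousLinearEquiv.toHomeomorph.toMeasurableEquiv
  have hcoe : ⇑e = fun x => A.mulVec x := by
    funext x
    simp [e, eL, Matrix.toLinearEquiv', Matrix.toLin'_apply]
  have hmap : Measure.map (fun x => A.mulVec x) volume
      = ENNReal.ofReal |A.det⁻¹| • volume := by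
    have h := Real.map_matrix_volume_pi_eq_smul_volume_pi hA
    rwa [show ⇑(Matrix.toLin' A) = fun x => A.mulVec x
      from funext fun x => Matrix.toLin'_apply A x] at h
  have h1 := integrable_map_equiv (μ := volume) e f
  rw [hcoe, hmap] at h1
  have hc0 : (ENNReal.ofReal |A.det⁻¹|) ≠ 0 := by
    simp [ENNReal.ofReal_eq_zero, abs_pos, inv_ne_zero hA, not_le, abs_pos.mpr (inv_ne_zero hA), hA]
  have h2 := integrable_smul_measure (μ := (volume : Measure (Fin k → ℝ))) (f := f)
    hc0 ENNReal.ofReal_ne_top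
  rw [h2] at h1
  exact h1.symm

private lemma exp_sum_sq_eq_prod (y : Fin k → ℝ) :
    Real.exp (-∑ i, (y i) ^ 2) = ∏ i, Real.exp (-(y i) ^ 2) := by
  rw [← Real.exp_sum, ← Finset.sum_neg_distrib]

private lemma integrable_gauss_pi :
    Integrable (fun y : Fin k → ℝ => Real.exp (-∑ i, (y i) ^ 2)) := by
  simp_rw [exp_sum_sq_eq_prod]
  exact Integrable.fintype_prod (𝕜 := ℝ) (f := fun (_ : Fin k) (t : ℝ) => Real.exp (-t ^ 2))
    fun i => by simpa using integrable_exp_neg_mul_sq (one_pos)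

private lemma integral_gauss_pi :
    ∫ y : Fin k → ℝ, Real.exp (-∑ i, (y i) ^ 2) = (Real.sqrt Real.pi) ^ k := by
  simp_rw [exp_sum_sq_eq_prod]
  rw [integral_fintype_prod_volume_eq_prod (𝕜 := ℝ) (f := fun (_ : Fin k) (t : ℝ) => Real.exp (-t ^ 2))]
  have h1 : (∫ t : ℝ, Real.exp (-t ^ 2)) = Real.sqrt Real.pi := by
    have := integral_gaussian 1
    simpa using this
  simp [h1]

private lemma integrable_gauss_mul (l : Fin k) :
    Integrable (fun y : Fin k → ℝ => Real.exp (-∑ i, (y i) ^ 2) * y l) := by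
  have h : (fun y : Fin k → ℝ => Real.exp (-∑ i, (y i) ^ 2) * y l)
      = fun y : Fin k → ℝ => ∏ i,
          (if i = l then y i * Real.exp (-(y i) ^ 2) else Real.exp (-(y i) ^ 2)) := by
    funext y
    rw [exp_sum_sq_eq_prod,
      ← Finset.mul_prod_erase Finset.univ (fun i => Real.exp (-(y i) ^ 2)) (Finset.mem_univ l),
      ← Finset.mul_prod_erase Finset.univ
        (fun i => if i = l then y i * Real.exp (-(y i) ^ 2) else Real.exp (-(y i) ^ 2))
        (Finset.mem_univ l)]
    have he : ∏ i ∈ Finset.univ.erase l,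
        (if i = l then y i * Real.exp (-(y i) ^ 2) else Real.exp (-(y i) ^ 2))
        = ∏ i ∈ Finset.univ.erase l, Real.exp (-(y i) ^ 2) := by
      refine Finset.prod_congr rfl fun i hi => ?_
      rw [if_neg (Finset.ne_of_mem_erase hi)]
    rw [he, if_pos rfl]
    ring
  rw [h]
  refine Integrable.fintype_prod (𝕜 := ℝ)
    (f := fun (i : Fin k) (t : ℝ) =>
      if i = l then t * Real.exp (-t ^ 2) else Real.exp (-t ^ 2)) fun i => ?_
  by_cases hil : i = l
  · simp only [hil, if_pos rfl]
    simpa using integrable_mul_exp_neg_mul_sq (one_pos)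
  · simp only [if_neg hil]
    simpa using integrable_exp_neg_mul_sq (one_pos)

open scoped MatrixOrder in
private lemma gauss_quadratic {M : Matrix (Fin k) (Fin k) ℝ} (hM : M.PosDef) :
    Integrable (fun x : Fin k → ℝ => Real.exp (-(x ⬝ᵥ M.mulVec x))) ∧
    Integrable (fun x : Fin k → ℝ => Real.exp (-(x ⬝ᵥ M.mulVec x)) • x) ∧
    ∫ x : Fin k → ℝ, Real.exp (-(x ⬝ᵥ M.mulVec x))
      = (Real.sqrt Real.pi) ^ k / Real.sqrt M.det := by
  classical
  set R := CFC.sqrt M with hRdef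
  have hR : R.PosSemidef := (CFC.sqrt_nonneg M).posSemidef
  have hRR : R * R = M := CFC.sqrt_mul_sqrt_self M hM.posSemidef.nonneg
  have hdet : R.det * R.det = M.det := by rw [← Matrix.det_mul, hRR]
  have hdetM : 0 < M.det := hM.det_pos
  have hdetR0 : R.det ≠ 0 := by
    intro h
    rw [h, mul_zero] at hdet
    exact hdetM.ne hdet
  have hdetRnn : 0 ≤ R.det := by
    rw [hR.1.det_eq_prod_eigenvalues]
    exact Finset.prod_nonneg fun i _ => hR.eigenvalues_nonneg i
  have hdetRpos : 0 < R.det := lt_of_le_of_ne hdetRnn (Ne.symm hdetR0)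
  have hsq : Real.sqrt M.det = R.det := by
    rw [← hdet, Real.sqrt_mul_self hdetRpos.le]
  have hRsymm : Rᵀ = R := by
    have h := hR.1
    rwa [Matrix.IsHermitian, conjTranspose_eq_transpose_of_trivial] at h
  have hquad : ∀ x, x ⬝ᵥ M.mulVec x = ∑ i, (R.mulVec x i) ^ 2 := by
    intro x
    rw [← hRR, ← Matrix.mulVec_mulVec, Matrix.dotProduct_mulVec]
    have hvm : x ᵥ* R = R.mulVec x := by
      rw [← hRsymm, Matrix.vecMul_transpose, hRsymm]
    rw [hvm]
    simp [dotProduct, sq]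
  have hcomp : (fun x : Fin k → ℝ => Real.exp (-(x ⬝ᵥ M.mulVec x)))
      = fun x => (fun y : Fin k → ℝ => Real.exp (-∑ i, (y i) ^ 2)) (R.mulVec x) := by
    funext x
    rw [hquad]
  have hinv : R⁻¹ * R = 1 := Matrix.nonsing_inv_mul R (isUnit_iff_ne_zero.mpr hdetR0)
  refine ⟨?_, ?_, ?_⟩
  · rw [hcomp]
    exact (integrable_comp_mulVec_iff' R hdetR0
      (fun y : Fin k → ℝ => Real.exp (-∑ i, (y i) ^ 2))).2 integrable_gauss_pi
  · have hcomp2 : (fun x : Fin k → ℝ => Real.exp (-(x ⬝ᵥ M.mulVec x)) • x)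
        = fun x => (fun y : Fin k → ℝ =>
            Real.exp (-∑ i, (y i) ^ 2) • (R⁻¹.mulVec y)) (R.mulVec x) := by
      funext x
      show Real.exp (-(x ⬝ᵥ M.mulVec x)) • x
          = Real.exp (-∑ i, ((R.mulVec x) i) ^ 2) • (R⁻¹.mulVec (R.mulVec x))
      rw [Matrix.mulVec_mulVec, hinv, Matrix.one_mulVec, hquad]
    rw [hcomp2]
    refine (integrable_comp_mulVec_iff' R hdetR0
      (fun y : Fin k → ℝ => Real.exp (-∑ i, (y i) ^ 2) • (R⁻¹.mulVec y))).2 ?_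
    have hrepr : (fun y : Fin k → ℝ => Real.exp (-∑ i, (y i) ^ 2) • (R⁻¹.mulVec y))
        = fun y => ∑ l, (Real.exp (-∑ i, (y i) ^ 2) * y l) • (fun j => R⁻¹ j l) := by
      funext y
      ext j
      simp only [Pi.smul_apply, smul_eq_mul, Finset.sum_apply, Matrix.mulVec, dotProduct]
      rw [Finset.mul_sum]
      refine Finset.sum_congr rfl fun l _ => ?_
      ring
    rw [hrepr]
    exact integrable_finset_sum _ fun l _ => (integrable_gauss_mul l).smul_const _
  · rw [hcomp]
    rw [integral_comp_mulVec' R hdetR0 (fun y : Fin k → ℝ => Real.exp (-∑ i, (y i) ^ 2))]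
    rw [integral_gauss_pi, hsq, abs_of_pos hdetRpos, smul_eq_mul]
    ring

private lemma sqrt_pow_eq (x : ℝ) (hx : 0 ≤ x) (n : ℕ) :
    Real.sqrt (x ^ n) = (Real.sqrt x) ^ n := by
  rw [show x ^ n = ((Real.sqrt x) ^ n) ^ 2 by
    rw [← pow_mul, mul_comm, pow_mul, Real.sq_sqrt hx],
    Real.sqrt_sq (pow_nonneg (Real.sqrt_nonneg x) n)]

private lemma rpow_neg_half_eq (x : ℝ) (hx : 0 < x) :
    x ^ (-(1 : ℝ) / 2) = (Real.sqrt x)⁻¹ := by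
  rw [Real.sqrt_eq_rpow, ← Real.rpow_neg hx.le]
  norm_num

private lemma rpow_neg_k_half_eq (x : ℝ) (hx : 0 < x) (n : ℕ) :
    x ^ (-(n : ℝ) / 2) = ((Real.sqrt x) ^ n)⁻¹ := by
  rw [Real.sqrt_eq_rpow, ← Real.rpow_natCast (x ^ ((1 : ℝ) / 2)) n,
    ← Real.rpow_mul hx.le, ← Real.rpow_neg hx.le]
  congr 1
  ring

end Aux

/-- The softmax-weighted mean of Gaussian samples centered at the optimum `U*`
equals `U*`: both the value of the weighted numerator and the fixed-point
property of the normalized mean. -/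
theorem stmt1 {k : ℕ} (D S : Matrix (Fin k) (Fin k) ℝ)
    (hD : D.PosSemidef) (hS : S.PosDef)
    (lam : ℝ) (hlam : 0 < lam)
    (Ustar : Fin k → ℝ) (Jstar : ℝ) (J : (Fin k → ℝ) → ℝ)
    (hJ : ∀ U, J U = (U - Ustar) ⬝ᵥ D.mulVec (U - Ustar) + Jstar)
    (w : (Fin k → ℝ) → ℝ)
    (hw : ∀ U, w U =
      ((2 * Real.pi) ^ (-(k : ℝ) / 2) * S.det ^ (-(1 : ℝ) / 2) *
        Real.exp (-(1 / 2) * ((U - Ustar) ⬝ᵥ S⁻¹.mulVec (U - Ustar)))) *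
        Real.exp (-(J U) / lam)) :
    (∫ U : Fin k → ℝ, w U • U)
        = (Real.exp (-Jstar / lam) / Real.sqrt ((1 + (2 / lam) • (D * S)).det)) • Ustar ∧
    (∫ U : Fin k → ℝ, w U)⁻¹ • (∫ U : Fin k → ℝ, w U • U) = Ustar := by
  classical
  have hdetS : 0 < S.det := hS.det_pos
  set M : Matrix (Fin k) (Fin k) ℝ := (2⁻¹ : ℝ) • S⁻¹ + lam⁻¹ • D with hMdef
  have hMpd : M.PosDef :=
    Matrix.PosDef.add_posSemidef (smul_posDef' hS.inv (by norm_num))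
      (smul_posSemidef' hD (by positivity))
  obtain ⟨hInt1, hInt2, hVal⟩ := gauss_quadratic hMpd
  set φ : (Fin k → ℝ) → ℝ := fun V => Real.exp (-(V ⬝ᵥ M.mulVec V)) with hφdef
  set Cst : ℝ := (2 * Real.pi) ^ (-(k : ℝ) / 2) * S.det ^ (-(1 : ℝ) / 2) with hCstdef
  set c : ℝ := Cst * Real.exp (-Jstar / lam) with hcdef
  have hwshift : ∀ V, w (V + Ustar) = c * φ V := by
    intro V
    have h1 : V + Ustar - Ustar = V := by abel
    rw [hw, hJ, h1]
    have hq : V ⬝ᵥ M.mulVec V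
        = 2⁻¹ * (V ⬝ᵥ S⁻¹.mulVec V) + lam⁻¹ * (V ⬝ᵥ D.mulVec V) := by
      simp [hMdef, Matrix.add_mulVec, Matrix.smul_mulVec, dotProduct_add,
        dotProduct_smul, smul_eq_mul]
    have hexp : -(1 / 2) * (V ⬝ᵥ S⁻¹.mulVec V) + -(V ⬝ᵥ D.mulVec V + Jstar) / lam
        = -Jstar / lam + -(V ⬝ᵥ M.mulVec V) := by
      rw [hq]
      field_simp
      ring
    rw [mul_assoc, ← Real.exp_add, hexp, Real.exp_add, ← mul_assoc]
  have hodd : (∫ V : Fin k → ℝ, φ V • V) = 0 := by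
    have h := integral_neg_eq_self (fun V : Fin k → ℝ => φ V • V) volume
    have heq : ∀ V : Fin k → ℝ, φ (-V) • (-V) = -(φ V • V) := by
      intro V
      have hqq : (-V) ⬝ᵥ M.mulVec (-V) = V ⬝ᵥ M.mulVec V := by
        rw [Matrix.mulVec_neg, neg_dotProduct, dotProduct_neg, neg_neg]
      simp [hφdef, hqq, smul_neg]
    simp_rw [heq] at h
    rw [integral_neg] at h
    have h2 : (2 : ℝ) • (∫ V : Fin k → ℝ, φ V • V) = 0 := by
      rw [two_smul]
      nth_rewrite 1 [← h]
      abel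
    have := smul_eq_zero.mp h2
    simpa using this
  have hNum : (∫ U : Fin k → ℝ, w U • U) = (c * ∫ V : Fin k → ℝ, φ V) • Ustar := by
    rw [← integral_add_right_eq_self (μ := volume) (fun U : Fin k → ℝ => w U • U) Ustar]
    have hptw : ∀ V : Fin k → ℝ,
        w (V + Ustar) • (V + Ustar) = c • (φ V • V) + (c * φ V) • Ustar := by
      intro V
      rw [hwshift V, smul_add, smul_smul]
    simp_rw [hptw]
    have hA : Integrable (fun V : Fin k → ℝ => c • (φ V • V)) := hInt2.smul c
    have hB : Integrable (fun V : Fin k → ℝ => (c * φ V) • Ustar) :=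
      (hInt1.const_mul c).smul_const Ustar
    rw [integral_add hA hB, integral_smul, hodd, smul_zero, zero_add, integral_smul_const,
      integral_const_mul]
  have hDen : (∫ U : Fin k → ℝ, w U) = c * ∫ V : Fin k → ℝ, φ V := by
    rw [← integral_add_right_eq_self (μ := volume) (fun U : Fin k → ℝ => w U) Ustar]
    simp_rw [hwshift]
    rw [integral_const_mul]
  -- determinant identity
  set T : Matrix (Fin k) (Fin k) ℝ := 1 + (2 / lam) • (D * S) with hTdef
  have hSinv : S * S⁻¹ = 1 := Matrix.mul_nonsing_inv S (isUnit_iff_ne_zero.mpr hdetS.ne')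
  have hMT : M = (2⁻¹ : ℝ) • (T * S⁻¹) := by
    rw [hTdef, Matrix.add_mul, Matrix.one_mul, Matrix.smul_mul, mul_assoc, hSinv, mul_one,
      smul_add, smul_smul, hMdef]
    congr 2
    field_simp
  have hdetM2 : M.det = (2⁻¹ : ℝ) ^ k * (T.det * S.det⁻¹) := by
    rw [hMT, Matrix.det_smul, Matrix.det_mul, Matrix.det_nonsing_inv, Ring.inverse_eq_inv']
    simp
  have hdetT : T.det = 2 ^ k * M.det * S.det := by
    rw [hdetM2]
    field_simp
    rw [mul_assoc, ← mul_pow]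
    norm_num
  have hdetMpos : 0 < M.det := hMpd.det_pos
  have hdetTpos : 0 < T.det := by rw [hdetT]; positivity
  -- the scalar value
  have hcval : c * (∫ V : Fin k → ℝ, φ V)
      = Real.exp (-Jstar / lam) / Real.sqrt T.det := by
    rw [hVal, hcdef, hCstdef]
    have h2pi : (0 : ℝ) < 2 * Real.pi := by positivity
    rw [rpow_neg_k_half_eq _ h2pi k, rpow_neg_half_eq _ hdetS]
    have hs2pi : Real.sqrt (2 * Real.pi) = Real.sqrt 2 * Real.sqrt Real.pi :=
      Real.sqrt_mul (by norm_num) _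
    have hsT : Real.sqrt T.det
        = Real.sqrt 2 ^ k * Real.sqrt M.det * Real.sqrt S.det := by
      rw [hdetT, Real.sqrt_mul (by positivity), Real.sqrt_mul (by positivity),
        sqrt_pow_eq 2 (by norm_num)]
    rw [hs2pi, hsT]
    have hπ : (0 : ℝ) < Real.sqrt Real.pi := Real.sqrt_pos.mpr Real.pi_pos
    have h2 : (0 : ℝ) < Real.sqrt 2 := Real.sqrt_pos.mpr (by norm_num)
    have hsS : (0 : ℝ) < Real.sqrt S.det := Real.sqrt_pos.mpr hdetS
    have hsM : (0 : ℝ) < Real.sqrt M.det := Real.sqrt_pos.mpr hdetMpos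
    rw [mul_pow]
    field_simp
  have hvalpos : 0 < Real.exp (-Jstar / lam) / Real.sqrt T.det := by
    have := Real.sqrt_pos.mpr hdetTpos
    positivity
  constructor
  · rw [hNum, hcval]
  · rw [hNum, hDen, hcval, smul_smul, inv_mul_cancel₀ hvalpos.ne', one_smul]
end

section
/- Let D be symmetric positive semi-definite, Σ symmetric positive definite, λ > 0, and J(U) = (U−U*)ᵀD(U−U*) + J*. If 𝒰 ~ 𝒩(U_in, Σ) for an arbitrary mean U_in, then E[𝒰 exp(−J(𝒰)/λ)] / E[exp(−J(𝒰)/λ)] = U_in + (2/λ)(Σ^{-1} + (2/λ)D)^{-1} D (U* − U_in). -/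
open MeasureTheory Matrix

section Aux

lemma sym_dot {n : Type*} [Fintype n] {M : Matrix n n ℝ} (hM : Mᵀ = M) (a b : n → ℝ) :
    a ⬝ᵥ M *ᵥ b = b ⬝ᵥ M *ᵥ a := by
  rw [dotProduct_mulVec b M a, ← mulVec_transpose, hM, dotProduct_comm]

lemma expand_quad {n : Type*} [Fintype n] {M : Matrix n n ℝ} (hM : Mᵀ = M) (v a : n → ℝ) :
    (v + a) ⬝ᵥ M *ᵥ (v + a) = v ⬝ᵥ M *ᵥ v + 2 * (v ⬝ᵥ M *ᵥ a) + a ⬝ᵥ M *ᵥ a := by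
  rw [mulVec_add, add_dotProduct, dotProduct_add, dotProduct_add, sym_dot hM a v]
  ring

lemma smul_posSemidef {n : Type*} [Fintype n] {D : Matrix n n ℝ} (hD : D.PosSemidef)
    {c : ℝ} (hc : 0 ≤ c) : (c • D).PosSemidef := by
  refine ⟨?_, fun x => ?_⟩
  · unfold Matrix.IsHermitian
    rw [conjTranspose_smul, hD.1]
    simp
  · exact (hD.smul hc).2 x

lemma quad_lb {n : Type*} [Fintype n] [DecidableEq n] [Nonempty n]
    {A : Matrix n n ℝ} (hA : A.PosDef) :
    ∃ c > 0, ∀ v : n → ℝ, c * (v ⬝ᵥ v) ≤ v ⬝ᵥ A *ᵥ v := by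
  classical
  have hH := hA.1
  set μ := hH.eigenvalues with hμ
  set c := Finset.univ.inf' Finset.univ_nonempty μ with hcdef
  have hc : 0 < c := by
    rw [hcdef, Finset.lt_inf'_iff]
    exact fun i _ => hA.eigenvalues_pos i
  refine ⟨c, hc, fun v => ?_⟩
  set V := (hH.eigenvectorUnitary : Matrix n n ℝ) with hV
  have hVV : V * star V = 1 := (Matrix.mem_unitaryGroup_iff).mp hH.eigenvectorUnitary.2
  have hstar : star V = Vᵀ := by
    rw [Matrix.star_eq_conjTranspose, Matrix.conjTranspose_eq_transpose_of_trivial]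
  set u := Vᵀ *ᵥ v with hu
  have h1 : v ⬝ᵥ A *ᵥ v = u ⬝ᵥ (diagonal (RCLike.ofReal ∘ μ)) *ᵥ u := by
    conv_lhs => rw [hH.spectral_theorem, Unitary.conjStarAlgAut_apply]
    rw [hstar] at *
    rw [← mulVec_mulVec, ← mulVec_mulVec, dotProduct_mulVec v V, ← mulVec_transpose]
  have h2 : u ⬝ᵥ u = v ⬝ᵥ v := by
    rw [hu, mulVec_transpose, ← dotProduct_mulVec, ← mulVec_transpose, mulVec_mulVec, ← hstar,
      hVV, one_mulVec]
  rw [h1, ← h2]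
  have : u ⬝ᵥ (diagonal (RCLike.ofReal ∘ μ)) *ᵥ u = ∑ i, μ i * (u i * u i) := by
    simp [dotProduct, mulVec_diagonal]
    exact Finset.sum_congr rfl fun i _ => by ring
  rw [this, dotProduct, Finset.mul_sum]
  apply Finset.sum_le_sum
  intro i _
  exact mul_le_mul_of_nonneg_right (Finset.inf'_le _ (Finset.mem_univ i)) (mul_self_nonneg _)

variable {k : ℕ} {A : Matrix (Fin k) (Fin k) ℝ} {c : ℝ}

lemma g_cont (A : Matrix (Fin k) (Fin k) ℝ) :
    Continuous (fun v : Fin k → ℝ => Real.exp (-(1/2) * (v ⬝ᵥ A *ᵥ v))) :=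
  Real.continuous_exp.comp
    (continuous_const.mul (continuous_id.dotProduct
      (continuous_const.matrix_mulVec continuous_id)))

lemma g_le (hc : 0 < c) (hq : ∀ v : Fin k → ℝ, c * (v ⬝ᵥ v) ≤ v ⬝ᵥ A *ᵥ v)
    (v : Fin k → ℝ) :
    Real.exp (-(1/2) * (v ⬝ᵥ A *ᵥ v)) ≤ ∏ i, Real.exp (-(c/2) * v i ^ 2) := by
  rw [← Real.exp_sum]
  apply Real.exp_le_exp.2
  have h := hq v
  have : ∑ i, -(c/2) * v i ^ 2 = -(1/2) * (c * (v ⬝ᵥ v)) := by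
    rw [dotProduct, Finset.mul_sum, Finset.mul_sum]
    exact Finset.sum_congr rfl fun i _ => by ring
  rw [this]
  nlinarith

lemma integrable_g (hc : 0 < c) (hq : ∀ v : Fin k → ℝ, c * (v ⬝ᵥ v) ≤ v ⬝ᵥ A *ᵥ v) :
    Integrable (fun v : Fin k → ℝ => Real.exp (-(1/2) * (v ⬝ᵥ A *ᵥ v))) := by
  apply Integrable.mono' (Integrable.fintype_prod
    (f := fun (i : Fin k) (x : ℝ) => Real.exp (-(c/2) * x ^ 2))
    (fun i => integrable_exp_neg_mul_sq (by positivity)))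
    (g_cont A).aestronglyMeasurable
  filter_upwards with v
  rw [Real.norm_eq_abs, abs_of_pos (Real.exp_pos _)]
  exact g_le hc hq v

lemma integrable_g_smul (hc : 0 < c)
    (hq : ∀ v : Fin k → ℝ, c * (v ⬝ᵥ v) ≤ v ⬝ᵥ A *ᵥ v) :
    Integrable (fun v : Fin k → ℝ => Real.exp (-(1/2) * (v ⬝ᵥ A *ᵥ v)) • v) := by
  classical
  set f : Fin k → Fin k → ℝ → ℝ := fun i j x =>
    if j = i then |x| * Real.exp (-(c/2) * x ^ 2) else Real.exp (-(c/2) * x ^ 2) with hf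
  have hfint : ∀ i j, Integrable (f i j) := by
    intro i j
    by_cases h : j = i
    · subst h
      have := (integrable_mul_exp_neg_mul_sq (b := c/2) (by positivity)).abs
      apply this.congr
      filter_upwards with x
      rw [abs_mul, abs_of_pos (Real.exp_pos _)]
      simp [hf]
    · simpa [hf, h] using integrable_exp_neg_mul_sq (b := c/2) (by positivity)
  have hH : Integrable (fun v : Fin k → ℝ => ∑ i, ∏ j, f i j (v j)) :=
    integrable_finset_sum _ (fun i _ => Integrable.fintype_prod (fun j => hfint i j))
  apply Integrable.mono' hH
    (((g_cont A).smul continuous_id).aestronglyMeasurable)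
  filter_upwards with v
  have hprod : ∀ i, (∏ j, f i j (v j)) = |v i| * ∏ j, Real.exp (-(c/2) * v j ^ 2) := by
    intro i
    rw [← Finset.mul_prod_erase Finset.univ _ (Finset.mem_univ i),
        ← Finset.mul_prod_erase Finset.univ (fun j => Real.exp (-(c/2) * v j ^ 2))
          (Finset.mem_univ i)]
    have : ∀ j ∈ Finset.univ.erase i, f i j (v j) = Real.exp (-(c/2) * v j ^ 2) := by
      intro j hj
      simp [hf, Finset.ne_of_mem_erase hj]
    rw [Finset.prod_congr rfl this]
    simp [hf, mul_assoc]
  have hnorm : ‖Real.exp (-(1/2) * (v ⬝ᵥ A *ᵥ v)) • v‖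
      ≤ Real.exp (-(1/2) * (v ⬝ᵥ A *ᵥ v)) * ∑ i, |v i| := by
    rw [norm_smul, Real.norm_eq_abs, abs_of_pos (Real.exp_pos _)]
    apply mul_le_mul_of_nonneg_left _ (Real.exp_pos _).le
    apply pi_norm_le_iff_of_nonneg (Finset.sum_nonneg fun i _ => abs_nonneg _) |>.2
    intro i
    exact Finset.single_le_sum (f := fun j => |v j|) (fun j _ => abs_nonneg _) (Finset.mem_univ i)
  apply hnorm.trans
  rw [Finset.mul_sum]
  apply Finset.sum_le_sum
  intro i _
  rw [hprod i, mul_comm (|v i|)]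
  exact mul_le_mul_of_nonneg_right (g_le hc hq v) (abs_nonneg _)

end Aux

/-- General mean case: the softmax-weighted Gaussian mean contracts toward `U*`. -/
theorem stmt2 {k : ℕ} (D S : Matrix (Fin k) (Fin k) ℝ)
    (hD : D.PosSemidef) (hS : S.PosDef)
    (lam : ℝ) (hlam : 0 < lam)
    (Uin Ustar : Fin k → ℝ) (Jstar : ℝ) (J : (Fin k → ℝ) → ℝ)
    (hJ : ∀ U, J U = (U - Ustar) ⬝ᵥ D.mulVec (U - Ustar) + Jstar)
    (w : (Fin k → ℝ) → ℝ)
    (hw : ∀ U, w U =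
      ((2 * Real.pi) ^ (-(k : ℝ) / 2) * S.det ^ (-(1 : ℝ) / 2) *
        Real.exp (-(1 / 2) * ((U - Uin) ⬝ᵥ S⁻¹.mulVec (U - Uin)))) *
        Real.exp (-(J U) / lam)) :
    (∫ U : Fin k → ℝ, w U)⁻¹ • (∫ U : Fin k → ℝ, w U • U)
      = Uin + (2 / lam) • ((S⁻¹ + (2 / lam) • D)⁻¹ * D).mulVec (Ustar - Uin) := by
  rcases Nat.eq_zero_or_pos k with hk | hk
  · subst hk
    exact Subsingleton.elim _ _
  haveI : Nonempty (Fin k) := Fin.pos_iff_nonempty.mp hk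
  have hlam' : lam ≠ 0 := hlam.ne'
  have hc2 : 0 < 2 / lam := by positivity
  have hSi : (S⁻¹).PosDef := hS.inv
  have hA : (S⁻¹ + (2 / lam) • D).PosDef := hSi.add_posSemidef (smul_posSemidef hD hc2.le)
  set A := S⁻¹ + (2 / lam) • D with hAdef
  have hAsymm : Aᵀ = A := by
    rw [← Matrix.conjTranspose_eq_transpose_of_trivial]; exact hA.1
  have hSisymm : (S⁻¹)ᵀ = S⁻¹ := by
    rw [← Matrix.conjTranspose_eq_transpose_of_trivial]; exact hSi.1
  have hDsymm : Dᵀ = D := by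
    rw [← Matrix.conjTranspose_eq_transpose_of_trivial]; exact hD.1
  have hAinv : A * A⁻¹ = 1 := Matrix.mul_nonsing_inv A (isUnit_iff_ne_zero.mpr hA.det_pos.ne')
  set m := Uin + (2 / lam) • (A⁻¹ * D) *ᵥ (Ustar - Uin) with hmdef
  -- key linear identity
  have key0 : A *ᵥ m = S⁻¹ *ᵥ Uin + (2 / lam) • (D *ᵥ Ustar) := by
    rw [hmdef, mulVec_add, mulVec_smul, mulVec_mulVec, ← Matrix.mul_assoc, hAinv,
      Matrix.one_mul, hAdef, add_mulVec, smul_mulVec, mulVec_sub, smul_sub]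
    abel
  have hAm : S⁻¹ *ᵥ m + (2 / lam) • (D *ᵥ m) = A *ᵥ m := by
    rw [hAdef, add_mulVec, smul_mulVec]
  have key : S⁻¹ *ᵥ (m - Uin) + (2 / lam) • (D *ᵥ (m - Ustar)) = 0 := by
    have h := key0
    rw [← hAm] at h
    rw [mulVec_sub, mulVec_sub, smul_sub, sub_add_sub_comm, h, sub_self]
  set Cst := (m - Uin) ⬝ᵥ S⁻¹ *ᵥ (m - Uin) + (2 / lam) * ((m - Ustar) ⬝ᵥ D *ᵥ (m - Ustar))
    with hCst
  have quadId : ∀ U : Fin k → ℝ,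
      (U - Uin) ⬝ᵥ S⁻¹ *ᵥ (U - Uin) + (2 / lam) * ((U - Ustar) ⬝ᵥ D *ᵥ (U - Ustar))
        = (U - m) ⬝ᵥ A *ᵥ (U - m) + Cst := by
    intro U
    have e1 : U - Uin = (U - m) + (m - Uin) := by abel
    have e2 : U - Ustar = (U - m) + (m - Ustar) := by abel
    have hsplit : (U - m) ⬝ᵥ A *ᵥ (U - m)
        = (U - m) ⬝ᵥ S⁻¹ *ᵥ (U - m) + (2 / lam) * ((U - m) ⬝ᵥ D *ᵥ (U - m)) := by
      rw [hAdef, add_mulVec, smul_mulVec, dotProduct_add, dotProduct_smul, smul_eq_mul]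
    have hcross : (U - m) ⬝ᵥ (S⁻¹ *ᵥ (m - Uin))
        + (2 / lam) * ((U - m) ⬝ᵥ (D *ᵥ (m - Ustar))) = 0 := by
      have h := congrArg (fun x => (U - m) ⬝ᵥ x) key
      simpa [dotProduct_add, dotProduct_smul, smul_eq_mul] using h
    rw [e1, e2, expand_quad hSisymm, expand_quad hDsymm, hsplit, hCst]
    linear_combination 2 * hcross
  set g : (Fin k → ℝ) → ℝ := fun v => Real.exp (-(1/2) * (v ⬝ᵥ A *ᵥ v)) with hgdef
  obtain ⟨c, hc, hq⟩ := quad_lb hA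
  have hgint : Integrable g := integrable_g hc hq
  have hgvint : Integrable (fun v => g v • v) := integrable_g_smul hc hq
  set K := (2 * Real.pi) ^ (-(k : ℝ) / 2) * S.det ^ (-(1 : ℝ) / 2) with hK
  have hKpos : 0 < K :=
    mul_pos (Real.rpow_pos_of_pos (by positivity) _) (Real.rpow_pos_of_pos hS.det_pos _)
  set c0 := K * Real.exp (-(1/2) * Cst - Jstar / lam) with hc0def
  have hc0 : 0 < c0 := mul_pos hKpos (Real.exp_pos _)
  have hwg : ∀ U, w U = c0 * g (U - m) := by
    intro U
    rw [hw U, hJ U, hc0def]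
    simp only [hgdef]
    have hexp : Real.exp (-(1 / 2) * ((U - Uin) ⬝ᵥ S⁻¹ *ᵥ (U - Uin))) *
        Real.exp (-((U - Ustar) ⬝ᵥ D *ᵥ (U - Ustar) + Jstar) / lam) =
        Real.exp (-(1/2) * Cst - Jstar / lam) *
          Real.exp (-(1/2) * ((U - m) ⬝ᵥ A *ᵥ (U - m))) := by
      rw [← Real.exp_add, ← Real.exp_add]
      congr 1
      linear_combination (-(1/2) : ℝ) * quadId U
    conv_lhs => rw [mul_assoc]
    conv_rhs => rw [mul_assoc]
    rw [hexp, hK]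
  have hI : 0 < ∫ v, g v := by
    rw [integral_pos_iff_support_of_nonneg_ae
      (Filter.Eventually.of_forall fun v => (Real.exp_pos _).le) hgint]
    have hsupp : Function.support g = Set.univ :=
      Set.eq_univ_of_forall fun v => (Real.exp_pos _).ne'
    rw [hsupp]
    exact IsOpen.measure_pos volume isOpen_univ Set.univ_nonempty
  have hodd : (∫ v : Fin k → ℝ, g v • v) = 0 := by
    have h2 := integral_neg_eq_self (fun v : Fin k → ℝ => g v • v) volume
    have h1 : ∀ v : Fin k → ℝ, g (-v) • (-v) = -(g v • v) := by
      intro v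
      have hgv : g (-v) = g v := by
        simp only [hgdef]
        rw [mulVec_neg, dotProduct_neg, neg_dotProduct, neg_neg]
      rw [hgv, smul_neg]
    simp only [h1] at h2
    rw [integral_neg] at h2
    exact neg_eq_self.1 h2
  have h1 : (∫ U : Fin k → ℝ, w U) = c0 * ∫ v, g v := by
    simp only [hwg]
    rw [MeasureTheory.integral_const_mul, integral_sub_right_eq_self g m]
  have h2 : (∫ U : Fin k → ℝ, w U • U) = c0 • ((∫ v, g v) • m) := by
    simp only [hwg, mul_smul]
    rw [integral_smul]
    congr 1
    have step : (∫ U : Fin k → ℝ, g (U - m) • U) = ∫ v : Fin k → ℝ, g v • (v + m) := by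
      rw [← integral_sub_right_eq_self (fun v : Fin k → ℝ => g v • (v + m)) m]
      congr 1
      funext U
      simp
    rw [step]
    have hadd : ∀ v : Fin k → ℝ, g v • (v + m) = g v • v + g v • m := fun v => smul_add _ _ _
    simp only [hadd]
    rw [integral_add hgvint (hgint.smul_const m), hodd, zero_add, integral_smul_const]
  rw [h1, h2, smul_smul c0, inv_smul_smul₀ (mul_pos hc0 hI).ne']
end

section
/- Let D be symmetric positive semi-definite, Σ symmetric positive definite, and λ > 0. Then I − (2/λ)(Σ^{-1} + (2/λ)D)^{-1} D = ((2/λ)ΣD + I)^{-1}. In particular (2/λ)ΣD + I is invertible. -/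
open Matrix

theorem stmt3 {k : ℕ} (D S : Matrix (Fin k) (Fin k) ℝ)
    (hD : D.PosSemidef) (hS : S.PosDef)
    (lam : ℝ) (hlam : 0 < lam) :
    (1 : Matrix (Fin k) (Fin k) ℝ) - (2 / lam) • ((S⁻¹ + (2 / lam) • D)⁻¹ * D)
        = ((2 / lam) • (S * D) + 1)⁻¹ ∧
      IsUnit ((2 / lam) • (S * D) + 1) := by
  set c : ℝ := 2 / lam with hc
  have hcpos : 0 < c := by positivity
  have hcD : (c • D).PosSemidef := by
    refine ⟨by rw [Matrix.IsHermitian, conjTranspose_smul, hD.1.eq]; simp, fun x => ?_⟩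
    exact (hD.smul hcpos.le).2 x
  have hM : (S⁻¹ + c • D).PosDef := hS.inv.add_posSemidef hcD
  set M : Matrix (Fin k) (Fin k) ℝ := S⁻¹ + c • D with hMdef
  have hSu : IsUnit S.det := isUnit_iff_ne_zero.mpr hS.det_pos.ne'
  have hMu : IsUnit M.det := isUnit_iff_ne_zero.mpr hM.det_pos.ne'
  have hSinv : S * S⁻¹ = 1 := mul_nonsing_inv S hSu
  have hMinv : M⁻¹ * M = 1 := nonsing_inv_mul M hMu
  have key : c • (S * D) + 1 = S * M := by
    rw [hMdef, Matrix.mul_add, Matrix.mul_smul, hSinv, add_comm]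
  have hunit : IsUnit (c • (S * D) + 1) := by
    rw [key]
    exact (isUnit_iff_isUnit_det _).mpr (by rw [det_mul]; exact hSu.mul hMu)
  refine ⟨?_, hunit⟩
  rw [key, Matrix.mul_inv_rev]
  have : M⁻¹ * M = M⁻¹ * S⁻¹ + c • (M⁻¹ * D) := by
    rw [hMdef, Matrix.mul_add, Matrix.mul_smul]
  rw [hMinv] at this
  rw [this]
  abel
end

section
/- Let U_out = U_in + (2/λ)(Σ^{-1} + (2/λ)D)^{-1} D (U* − U_in), where Σ ≻ 0, D ⪰ 0, λ > 0. Then ‖U_out − U*‖ ≤ ‖((2/λ)ΣD + I)^{-1}‖ · ‖U_in − U*‖. -/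
open Matrix

noncomputable def opNorm {k : ℕ} (M : Matrix (Fin k) (Fin k) ℝ) : ℝ :=
  ‖(Matrix.toEuclideanLin M).toContinuousLinearMap‖

private lemma aux_abel {V : Type*} [AddCommGroup V] (u s x y : V) :
    u + (x - y) - s = u - s - (y - x) := by abel

theorem stmt5 {k : ℕ} (D S : Matrix (Fin k) (Fin k) ℝ)
    (hD : D.PosSemidef) (hS : S.PosDef)
    (lam : ℝ) (hlam : 0 < lam)
    (Uin Ustar Uout : EuclideanSpace ℝ (Fin k))
    (hUout : Uout = Uin + (2 / lam) •
      (WithLp.equiv 2 (Fin k → ℝ)).symm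
        (((S⁻¹ + (2 / lam) • D)⁻¹ * D).mulVec (WithLp.equiv 2 (Fin k → ℝ) (Ustar - Uin)))) :
    ‖Uout - Ustar‖ ≤ opNorm (((2 / lam) • (S * D) + 1)⁻¹) * ‖Uin - Ustar‖ := by
  set c := 2 / lam with hc
  have hcpos : 0 < c := by positivity
  set B := S⁻¹ + c • D with hB
  have hcD : (c • D).PosSemidef := by
    refine ⟨by rw [Matrix.IsHermitian, Matrix.conjTranspose_smul, hD.1]; simp, fun x => ?_⟩
    simpa [Matrix.smul_mulVec, Finsupp.mul_sum, mul_assoc, mul_left_comm] using mul_nonneg hcpos.le (hD.2 x)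
  have hBpd : B.PosDef := hS.inv.add_posSemidef hcD
  have hSdet : IsUnit S.det := hS.det_pos.ne'.isUnit
  have hBdet : IsUnit B.det := hBpd.det_pos.ne'.isUnit
  have hE : c • (S * D) + 1 = S * B := by
    rw [hB, Matrix.mul_add, Matrix.mul_smul, Matrix.mul_nonsing_inv S hSdet, add_comm]
  have hBBinv : B * B⁻¹ = 1 := Matrix.mul_nonsing_inv B hBdet
  have hinv : (c • (S * D) + 1)⁻¹ = 1 - c • (B⁻¹ * D) := by
    apply Matrix.inv_eq_right_inv
    rw [hE, Matrix.mul_sub, Matrix.mul_one, Matrix.mul_smul, Matrix.mul_assoc S B _,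
      ← Matrix.mul_assoc B B⁻¹ D, hBBinv, Matrix.one_mul, ← hE]
    abel
  have hone : ∀ v : EuclideanSpace ℝ (Fin k),
      Matrix.toEuclideanLin (1 : Matrix (Fin k) (Fin k) ℝ) v = v := by
    intro v
    rw [Matrix.toEuclideanLin_apply]
    simp
  have hkey : Uout - Ustar =
      (Matrix.toEuclideanLin ((c • (S * D) + 1)⁻¹)).toContinuousLinearMap (Uin - Ustar) := by
    rw [hinv, hUout]
    have h1 : (WithLp.equiv 2 (Fin k → ℝ)).symm
        ((B⁻¹ * D) *ᵥ (WithLp.equiv 2 (Fin k → ℝ)) (Ustar - Uin))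
        = Matrix.toEuclideanLin (B⁻¹ * D) (Ustar - Uin) :=
      (Matrix.toEuclideanLin_apply _ _).symm
    rw [h1, LinearMap.coe_toContinuousLinearMap',
      show Matrix.toEuclideanLin (1 - c • (B⁻¹ * D)) = Matrix.toEuclideanLin 1
          - c • Matrix.toEuclideanLin (B⁻¹ * D) by rw [map_sub, _root_.map_smul],
      LinearMap.sub_apply, LinearMap.smul_apply, hone,
      map_sub (Matrix.toEuclideanLin (B⁻¹ * D))]
    rw [map_sub (Matrix.toEuclideanLin (B⁻¹ * D)) Uin Ustar,
      smul_sub c ((Matrix.toEuclideanLin (B⁻¹ * D)) Uin) ((Matrix.toEuclideanLin (B⁻¹ * D)) Ustar),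
      smul_sub c ((Matrix.toEuclideanLin (B⁻¹ * D)) Ustar) ((Matrix.toEuclideanLin (B⁻¹ * D)) Uin)]
    exact aux_abel (V := EuclideanSpace ℝ (Fin k)) Uin Ustar _ _
  rw [hkey]
  unfold opNorm
  exact ContinuousLinearMap.le_opNorm _ _
end

section
/- Let D be symmetric positive definite, Σ symmetric positive definite, λ > 0, J(U) = (U−U*)ᵀD(U−U*) + J*, and U_out = U* + ((2/λ)ΣD + I)^{-1}(U_in − U*). Then J(U_out) − J* ≤ (J(U_in) − J*) · ‖(I + (2/λ)D^{1/2}ΣD^{1/2})^{-1}‖². -/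
open Matrix

set_option maxHeartbeats 1000000
set_option synthInstance.maxHeartbeats 400000

theorem stmt6 {k : ℕ} (D Dh S : Matrix (Fin k) (Fin k) ℝ)
    (hD : D.PosDef) (hDh : Dh.PosDef) (hDhD : Dh * Dh = D) (hS : S.PosDef)
    (lam : ℝ) (hlam : 0 < lam)
    (Uin Ustar Uout : Fin k → ℝ) (Jstar : ℝ) (J : (Fin k → ℝ) → ℝ)
    (hJ : ∀ U, J U = (U - Ustar) ⬝ᵥ D.mulVec (U - Ustar) + Jstar)
    (hUout : Uout = Ustar + ((2 / lam) • (S * D) + 1)⁻¹.mulVec (Uin - Ustar)) :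
    J Uout - Jstar ≤
      (J Uin - Jstar) * opNorm ((1 + (2 / lam) • (Dh * S * Dh))⁻¹) ^ 2 := by
  have hc : (0:ℝ) < 2 / lam := by positivity
  have hDht : Dhᵀ = Dh := by simpa using hDh.isHermitian.eq
  set A : Matrix (Fin k) (Fin k) ℝ := (2 / lam) • (S * D) + 1 with hA
  set B : Matrix (Fin k) (Fin k) ℝ := 1 + (2 / lam) • (Dh * S * Dh) with hB
  -- B is positive definite
  have hDSDh : (Dh * S * Dh).PosSemidef := by
    have := hS.posSemidef.mul_mul_conjTranspose_same Dh
    simpa [Matrix.mul_assoc, hDht] using this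
  have hsmul : ((2 / lam) • (Dh * S * Dh)).PosSemidef := by
    constructor
    · show _ᴴ = _
      rw [Matrix.conjTranspose_smul, hDSDh.1.eq]
      simp
    · intro x
      exact (hDSDh.smul hc.le).2 x
  have hBpd : B.PosDef := Matrix.PosDef.add_posSemidef Matrix.PosDef.one hsmul
  -- key identity Dh * A = B * Dh
  have hkey : Dh * A = B * Dh := by
    rw [hA, hB]
    rw [Matrix.mul_add, Matrix.add_mul, Matrix.mul_smul, Matrix.smul_mul,
      Matrix.mul_one, Matrix.one_mul]
    rw [← Matrix.mul_assoc, ← hDhD, Matrix.mul_assoc (Dh*S), Matrix.mul_assoc Dh S,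
      ← Matrix.mul_assoc]
    exact add_comm _ _
  -- A is invertible
  have hdetDh : IsUnit Dh.det := hDh.isUnit.map (detMonoidHom)
  have hdetB : IsUnit B.det := hBpd.isUnit.map (detMonoidHom)
  have hdetA : IsUnit A.det := by
    have hdd : Dh.det * A.det = B.det * Dh.det := by
      rw [← det_mul, ← det_mul, hkey]
    have h2 : A.det = B.det :=
      mul_left_cancel₀ hdetDh.ne_zero (by rw [hdd, mul_comm])
    rw [h2]; exact hdetB
  -- inverse identity
  have hinv : Dh * A⁻¹ = B⁻¹ * Dh := by
    have h1 : B⁻¹ * (B * Dh) * A⁻¹ = B⁻¹ * (Dh * A) * A⁻¹ := by rw [hkey]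
    rw [← Matrix.mul_assoc B⁻¹ B Dh, Matrix.nonsing_inv_mul _ hdetB, Matrix.one_mul,
      Matrix.mul_assoc B⁻¹ (Dh * A) A⁻¹, Matrix.mul_assoc Dh A A⁻¹,
      Matrix.mul_nonsing_inv _ hdetA, Matrix.mul_one] at h1
    exact h1
  -- vectors
  set v : Fin k → ℝ := Uin - Ustar with hv
  set w : Fin k → ℝ := A⁻¹.mulVec v with hw
  have hUoutv : Uout - Ustar = w := by rw [hUout]; abel
  set u : Fin k → ℝ := Dh.mulVec v with hu
  have hDhw : Dh.mulVec w = B⁻¹.mulVec u := by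
    rw [hu, hw, Matrix.mulVec_mulVec, Matrix.mulVec_mulVec, hinv]
  -- quadratic form as norm squared
  have hquad : ∀ z : Fin k → ℝ, z ⬝ᵥ D.mulVec z = (Dh.mulVec z) ⬝ᵥ (Dh.mulVec z) := by
    intro z
    rw [← hDhD, ← Matrix.mulVec_mulVec, Matrix.dotProduct_mulVec z Dh,
      ← Matrix.mulVec_transpose, hDht]
  -- Euclidean machinery
  have hnorm : ∀ z : Fin k → ℝ, z ⬝ᵥ z = ‖(WithLp.equiv 2 (Fin k → ℝ)).symm z‖ ^ 2 := by
    intro z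
    rw [EuclideanSpace.norm_eq]
    rw [Real.sq_sqrt (by positivity)]
    simp [dotProduct, sq]
  have hbound : ‖(WithLp.equiv 2 (Fin k → ℝ)).symm (B⁻¹.mulVec u)‖ ≤
      opNorm (B⁻¹) * ‖(WithLp.equiv 2 (Fin k → ℝ)).symm u‖ := by
    have hle := (Matrix.toEuclideanLin (B⁻¹)).toContinuousLinearMap.le_opNorm
      ((WithLp.equiv 2 (Fin k → ℝ)).symm u)
    rw [LinearMap.coe_toContinuousLinearMap'] at hle
    exact hle
  have hJout : J Uout - Jstar = ‖(WithLp.equiv 2 (Fin k → ℝ)).symm (B⁻¹.mulVec u)‖ ^ 2 := by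
    rw [hJ, hUoutv, hquad, hDhw, hnorm]; ring
  have hJin : J Uin - Jstar = ‖(WithLp.equiv 2 (Fin k → ℝ)).symm u‖ ^ 2 := by
    rw [hJ, hquad, ← hu, hnorm]; ring
  rw [hJout, hJin]
  calc ‖(WithLp.equiv 2 (Fin k → ℝ)).symm (B⁻¹.mulVec u)‖ ^ 2
      ≤ (opNorm (B⁻¹) * ‖(WithLp.equiv 2 (Fin k → ℝ)).symm u‖) ^ 2 :=
        pow_le_pow_left₀ (norm_nonneg _) hbound 2
    _ = ‖(WithLp.equiv 2 (Fin k → ℝ)).symm u‖ ^ 2 * opNorm (B⁻¹) ^ 2 := by ring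
end
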